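/- Let a, b ∈ (0,∞), Λ(x) = √(a|x|² + b) on ℝ², and for (μ,ν) ∈ {(+,+),(+,−),(−,−)} define the phase Φ_{μν}(ξ,η) = Λ(ξ) − μΛ(ξ−η) − νΛ(η). Then for all ξ, η ∈ ℝ², |∇_{ξ,η} Φ_{μν}(ξ,η)| ≲ |Φ_{μν}(ξ,η)|, with an implicit constant depending only on a and b. -/

import Mathlib

noncomputable section

open MeasureTheory Complex Filter
open scoped ENNReal FourierTransform RealInnerProductSpace

/-- The plane `ℝ²`. -/
abbrev Plane : Type := EuclideanSpace ℝ (Fin 2)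

/-- The Fourier multiplier operator with symbol `m`. -/
def fourierMult (m : Plane → ℂ) (f : Plane → ℂ) : Plane → ℂ :=
  𝓕⁻ fun ξ => m ξ * 𝓕 f ξ

/-- The symbol `Λ(ξ) = √(a|ξ|² + b)`. -/
def lamSym (a b : ℝ) (ξ : Plane) : ℝ := Real.sqrt (a * ‖ξ‖ ^ 2 + b)

/-- The operator `Λ = √(a|∇|² + b)`. -/
def LamOp (a b : ℝ) : (Plane → ℂ) → Plane → ℂ :=
  fourierMult fun ξ => (lamSym a b ξ : ℂ)

/-- The operator `Λ⁻¹`. -/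
def LamInvOp (a b : ℝ) : (Plane → ℂ) → Plane → ℂ :=
  fourierMult fun ξ => ((lamSym a b ξ : ℂ))⁻¹

/-- The operator `|∇|`, with symbol `|ξ|`. -/
def absNabla : (Plane → ℂ) → Plane → ℂ :=
  fourierMult fun ξ => (‖ξ‖ : ℂ)

/-- The partial derivative `∂_j`, as the Fourier multiplier with symbol `iξ_j`. -/
def partialD (j : Fin 2) : (Plane → ℂ) → Plane → ℂ :=
  fourierMult fun ξ => Complex.I * ((ξ j : ℝ) : ℂ)

/-- The Riesz transform `R_j = ∂_j/|∇|`, with symbol `iξ_j/|ξ|`. -/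
def Riesz (j : Fin 2) : (Plane → ℂ) → Plane → ℂ :=
  fourierMult fun ξ => Complex.I * ((ξ j : ℝ) : ℂ) / ((‖ξ‖ : ℝ) : ℂ)

/-- The linear propagator `e^{itΛ}`. -/
def eitLam (a b t : ℝ) : (Plane → ℂ) → Plane → ℂ :=
  fourierMult fun ξ => Complex.exp (Complex.I * (t : ℂ) * ((lamSym a b ξ : ℝ) : ℂ))

/-- The Laplacian `Δ`, with symbol `-|ξ|²`. -/
def lapOp : (Plane → ℂ) → Plane → ℂ :=
  fourierMult fun ξ => ((-(‖ξ‖ ^ 2) : ℝ) : ℂ)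

/-- The derivative `D^α = ∂₁^{α₁}∂₂^{α₂}`, with symbol `(iξ₁)^{α₁}(iξ₂)^{α₂}`. -/
def Dop (α : Fin 2 → ℕ) : (Plane → ℂ) → Plane → ℂ :=
  fourierMult fun ξ => ∏ j : Fin 2, (Complex.I * ((ξ j : ℝ) : ℂ)) ^ α j

/-- Pointwise complex conjugate of a function. -/
def conjF (f : Plane → ℂ) : Plane → ℂ := fun x => (starRingEnd ℂ) (f x)

/-- The quadratic nonlinearity
`(i/4)Σ_j ΛR_j[|∇|Λ⁻¹(U+Ū)·R_j(U−Ū)] + (i/8)Σ_j |∇|[R_j(U−Ū)·R_j(U−Ū)]`. -/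
def nonlin (a b : ℝ) (U : Plane → ℂ) : Plane → ℂ := fun x =>
  Complex.I / 4 *
      ∑ j : Fin 2,
        LamOp a b
          (Riesz j fun y =>
            absNabla (LamInvOp a b fun z => U z + conjF U z) y *
              Riesz j (fun z => U z - conjF U z) y) x +
    Complex.I / 8 *
      ∑ j : Fin 2,
        absNabla
          (fun y =>
            Riesz j (fun z => U z - conjF U z) y * Riesz j (fun z => U z - conjF U z) y) x

/-- The Sobolev `H^s` norm, defined on the Fourier side. -/
def sobolevNorm (s : ℝ) (f : Plane → ℂ) : ℝ≥0∞ :=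
  eLpNorm (fun ξ : Plane => ((1 + ‖ξ‖ ^ 2) ^ (s / 2) : ℝ) • 𝓕 f ξ) 2 volume

/-- `U ∈ C(I : H^s)`. -/
def ContInSobolev (s : ℝ) (I : Set ℝ) (U : ℝ → Plane → ℂ) : Prop :=
  (∀ t ∈ I, sobolevNorm s (U t) < ⊤) ∧
    ∀ t ∈ I,
      Tendsto (fun τ => sobolevNorm s fun x => U τ x - U t x) (nhdsWithin t I) (nhds 0)

/-- `U` solves `(∂_t + iΛ)U = nonlin(U)` on the time set `I`. -/
def IsSolutionOn (a b : ℝ) (I : Set ℝ) (U : ℝ → Plane → ℂ) : Prop :=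
  ∀ t ∈ I, ∀ x : Plane,
    HasDerivWithinAt (fun τ => U τ x)
      (-Complex.I * LamOp a b (U t) x + nonlin a b (U t) x) I t

/-- `U` solves the parabolic regularization `(∂_t + iΛ - εΔ)U = nonlin(U)` on `I`. -/
def IsRegSolutionOn (a b ε : ℝ) (I : Set ℝ) (U : ℝ → Plane → ℂ) : Prop :=
  ∀ t ∈ I, ∀ x : Plane,
    HasDerivWithinAt (fun τ => U τ x)
      (-Complex.I * LamOp a b (U t) x + (ε : ℂ) * lapOp (U t) x + nonlin a b (U t) x) I t

/-- `U` solves the forced equation `(∂_t + iΛ)U = F + nonlin(U)` on `I`. -/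
def IsForcedSolutionOn (a b : ℝ) (I : Set ℝ) (U F : ℝ → Plane → ℂ) : Prop :=
  ∀ t ∈ I, ∀ x : Plane,
    HasDerivWithinAt (fun τ => U τ x)
      (-Complex.I * LamOp a b (U t) x + nonlin a b (U t) x + F t x) I t

/-- An admissible Littlewood–Paley cutoff: even, smooth, `[0,1]`-valued, supported in
`[-8/5, 8/5]` and equal to `1` on `[-5/4, 5/4]`. -/
structure IsAdmissibleCutoff (φ : ℝ → ℝ) : Prop where
  smooth : ContDiff ℝ (⊤ : ℕ∞) φ
  even : ∀ x, φ (-x) = φ x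
  mem_Icc : ∀ x, φ x ∈ Set.Icc (0 : ℝ) 1
  eq_zero : ∀ x : ℝ, 8 / 5 < |x| → φ x = 0
  eq_one : ∀ x : ℝ, |x| ≤ 5 / 4 → φ x = 1

/-- The dyadic piece `φ_k(r) = φ(|r|/2^k) - φ(|r|/2^{k-1})`. -/
def phiLP (φ : ℝ → ℝ) (k : ℤ) (r : ℝ) : ℝ :=
  φ (|r| / 2 ^ k) - φ (|r| / 2 ^ (k - 1))

/-- `φ_I = Σ_{m ∈ I ∩ ℤ} φ_m` for an interval of integers `[m, n]`. -/
def phiSum (φ : ℝ → ℝ) (m n : ℤ) (r : ℝ) : ℝ :=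
  ∑ k ∈ Finset.Icc m n, phiLP φ k r

/-- The Littlewood–Paley projection `P_k`. -/
def Pk (φ : ℝ → ℝ) (k : ℤ) : (Plane → ℂ) → Plane → ℂ :=
  fourierMult fun ξ => ((phiLP φ k ‖ξ‖ : ℝ) : ℂ)

/-- The `Z` norm. -/
def zNorm (φ : ℝ → ℝ) (f : Plane → ℂ) : ℝ≥0∞ :=
  ⨆ k : ℤ,
    ENNReal.ofReal ((2 : ℝ) ^ ((k : ℝ) / 10) + (2 : ℝ) ^ (10 * (k : ℝ))) *
      (eLpNorm (Pk φ k f) 2 volume +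
        ∑' j : ℕ,
          ENNReal.ofReal ((2 : ℝ) ^ (j : ℕ)) *
            eLpNorm (fun x : Plane => phiLP φ (j : ℤ) ‖x‖ • Pk φ k f x) 2 volume)

/-- The `Y^{N₀}` norm, `‖f‖_{H^{N₀}} + ‖f‖_Z`. -/
def yNorm (φ : ℝ → ℝ) (s : ℝ) (f : Plane → ℂ) : ℝ≥0∞ :=
  sobolevNorm s f + zNorm φ f

/-- The `Z'` norm. -/
def z'Norm (φ : ℝ → ℝ) (f : Plane → ℂ) : ℝ≥0∞ :=
  ⨆ k : ℤ,
    ENNReal.ofReal ((2 : ℝ) ^ ((k : ℝ) / 2) + (2 : ℝ) ^ (2 * (k : ℝ))) *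
      eLpNorm (Pk φ k f) ⊤ volume

/-- The `X^N_T` norm. -/
def xNorm (φ : ℝ → ℝ) (a b N N₀ δ T : ℝ) (U : ℝ → Plane → ℂ) : ℝ≥0∞ :=
  (⨆ t : Set.Icc (0 : ℝ) T,
      ENNReal.ofReal ((1 + (t : ℝ)) ^ (-δ)) * sobolevNorm N (U (t : ℝ))) +
    ⨆ t : Set.Icc (0 : ℝ) T, yNorm φ N₀ (eitLam a b (t : ℝ) (U (t : ℝ)))

/-- Membership in the space `X^N_T`. -/
def MemXNT (φ : ℝ → ℝ) (a b N N₀ δ T : ℝ) (U : ℝ → Plane → ℂ) : Prop :=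
  ContInSobolev N (Set.Icc 0 T) U ∧
    (∀ t ∈ Set.Icc (0 : ℝ) T,
      Tendsto
        (fun τ => yNorm φ N₀ fun x => eitLam a b τ (U τ) x - eitLam a b t (U t) x)
        (nhdsWithin t (Set.Icc 0 T)) (nhds 0)) ∧
    xNorm φ a b N N₀ δ T U < ⊤

/-- Real part of a complex operator applied to (the complexification of) a real function. -/
def opRe (T : (Plane → ℂ) → Plane → ℂ) (g : Plane → ℝ) : Plane → ℝ := fun x =>
  (T (fun y => ((g y : ℝ) : ℂ)) x).re

/-- The energy `E_P` associated with `P = D^α`. -/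
def energyP (a b : ℝ) (α : Fin 2 → ℕ) (U : Plane → ℂ) : ℝ :=
  (∫ x : Plane, Complex.normSq (Dop α U x)) -
    1 / 8 *
      ∑ j : Fin 2,
        ∫ x : Plane,
          (absNabla (LamInvOp a b fun z => U z + conjF U z) x *
              (Riesz j (Dop α fun z => U z - conjF U z) x *
                Riesz j (Dop α fun z => U z - conjF U z) x)).re

/-- The total energy `E_σ = Σ_{|α| ≤ σ} E_P`. -/
def energyE (a b : ℝ) (σ : ℕ) (U : Plane → ℂ) : ℝ :=
  ∑ p ∈ (Finset.range (σ + 1) ×ˢ Finset.range (σ + 1)).filter fun p => p.1 + p.2 ≤ σ,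
    energyP a b ![p.1, p.2] U

/-- The difference energy `E_P^δ` from Lemma 3.2. -/
def energyDelta (a b : ℝ) (α : Fin 2 → ℕ) (U' Uδ : Plane → ℂ) : ℝ :=
  (∫ x : Plane,
      (opRe (Dop α) (fun y => (Uδ y).re) x) ^ 2 + (opRe (Dop α) (fun y => (Uδ y).im) x) ^ 2) +
    ∑ j : Fin 2,
      ∫ x : Plane,
        opRe (fun h => absNabla (LamInvOp a b h)) (fun y => (U' y).re) x *
          (opRe (fun h => Riesz j (Dop α h)) (fun y => (Uδ y).im) x) ^ 2

/-- The difference energy `E^δ_{Id}`. -/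
def energyDeltaId (a b : ℝ) (U' Uδ : Plane → ℂ) : ℝ :=
  (∫ x : Plane, (Uδ x).re ^ 2 + (Uδ x).im ^ 2) +
    ∑ j : Fin 2,
      ∫ x : Plane,
        opRe (fun h => absNabla (LamInvOp a b h)) (fun y => (U' y).re) x *
          (opRe (Riesz j) (fun y => (Uδ y).im) x) ^ 2

/-- The quadratic symbol `m_{++}`. -/
def mpp (a b c₀ : ℝ) (ξ η : Plane) : ℂ :=
  (c₀ : ℂ) * Complex.I *
    (((-(lamSym a b ξ) * ‖ξ - η‖ * ⟪ξ, η⟫) / (4 * lamSym a b (ξ - η) * ‖ξ‖ * ‖η‖) +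
          (-‖ξ‖ * ⟪η, ξ - η⟫) / (8 * ‖η‖ * ‖ξ - η‖) : ℝ) : ℂ)

/-- The quadratic symbol `m_{+-}`. -/
def mpm (a b c₀ : ℝ) (ξ η : Plane) : ℂ :=
  (c₀ : ℂ) * Complex.I *
    (((-(lamSym a b ξ) * ‖η‖ * ⟪ξ, ξ - η⟫) / (4 * lamSym a b η * ‖ξ‖ * ‖ξ - η‖) +
          (lamSym a b ξ * ‖ξ - η‖ * ⟪ξ, η⟫) / (4 * lamSym a b (ξ - η) * ‖ξ‖ * ‖η‖) +
          (‖ξ‖ * ⟪η, ξ - η⟫) / (4 * ‖η‖ * ‖ξ - η‖) : ℝ) : ℂ)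

/-- The quadratic symbol `m_{--}`. -/
def mmm (a b c₀ : ℝ) (ξ η : Plane) : ℂ :=
  (c₀ : ℂ) * Complex.I *
    (((lamSym a b ξ * ‖ξ - η‖ * ⟪ξ, η⟫) / (4 * lamSym a b (ξ - η) * ‖ξ‖ * ‖η‖) +
          (-‖ξ‖ * ⟪η, ξ - η⟫) / (8 * ‖η‖ * ‖ξ - η‖) : ℝ) : ℂ)

/-- `m'_{--}(v,w) = conj(m_{++}(-v,-w))`. -/
def m'mm (a b c₀ : ℝ) (v w : Plane) : ℂ := (starRingEnd ℂ) (mpp a b c₀ (-v) (-w))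

/-- `m'_{-+}(v,w) = conj(m_{+-}(-v,-w))`. -/
def m'mp (a b c₀ : ℝ) (v w : Plane) : ℂ := (starRingEnd ℂ) (mpm a b c₀ (-v) (-w))

/-- `m'_{++}(v,w) = conj(m_{--}(-v,-w))`. -/
def m'pp (a b c₀ : ℝ) (v w : Plane) : ℂ := (starRingEnd ℂ) (mmm a b c₀ (-v) (-w))

/-- The phase `Φ_{++}(ξ,η) = Λ(ξ) - Λ(ξ-η) - Λ(η)`. -/
def PhiPP (a b : ℝ) (ξ η : Plane) : ℝ := lamSym a b ξ - lamSym a b (ξ - η) - lamSym a b η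

/-- The phase `Φ_{+-}(ξ,η) = Λ(ξ) - Λ(ξ-η) + Λ(η)`. -/
def PhiPM (a b : ℝ) (ξ η : Plane) : ℝ := lamSym a b ξ - lamSym a b (ξ - η) + lamSym a b η

/-- The phase `Φ_{--}(ξ,η) = Λ(ξ) + Λ(ξ-η) + Λ(η)`. -/
def PhiMM (a b : ℝ) (ξ η : Plane) : ℝ := lamSym a b ξ + lamSym a b (ξ - η) + lamSym a b η

/-- The cubic symbol `m_{+++}`. -/
def m3ppp (a b c₀ : ℝ) (ξ η χ : Plane) : ℂ :=
  mpp a b c₀ ξ χ * mpp a b c₀ (ξ - χ) (η - χ) / ((PhiPP a b ξ χ : ℝ) : ℂ) +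
    mpp a b c₀ ξ η * mpp a b c₀ η χ / ((PhiPP a b ξ η : ℝ) : ℂ) +
    mpm a b c₀ ξ η * m'pp a b c₀ η χ / ((PhiPM a b ξ η : ℝ) : ℂ)

/-- The cubic symbol `m_{++-}`. -/
def m3ppm (a b c₀ : ℝ) (ξ η χ : Plane) : ℂ :=
  mpp a b c₀ ξ (ξ - η) * mpm a b c₀ η χ / ((PhiPP a b ξ (ξ - η) : ℝ) : ℂ) +
    mpp a b c₀ ξ η * mpm a b c₀ η χ / ((PhiPP a b ξ η : ℝ) : ℂ) +
    mpm a b c₀ ξ χ * mpp a b c₀ (ξ - χ) (η - χ) / ((PhiPM a b ξ χ : ℝ) : ℂ) +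
    mpm a b c₀ ξ η * m'mp a b c₀ η (η - χ) / ((PhiPM a b ξ η : ℝ) : ℂ) +
    mmm a b c₀ ξ χ * m'pp a b c₀ (ξ - χ) (ξ - η) / ((PhiMM a b ξ χ : ℝ) : ℂ) +
    mmm a b c₀ ξ (ξ - χ) * m'pp a b c₀ (ξ - χ) (ξ - η) / ((PhiMM a b ξ (ξ - χ) : ℝ) : ℂ)

/-- The cubic symbol `m_{+--}`. -/
def m3pmm (a b c₀ : ℝ) (ξ η χ : Plane) : ℂ :=
  mpp a b c₀ ξ (ξ - η) * mmm a b c₀ η χ / ((PhiPP a b ξ (ξ - η) : ℝ) : ℂ) +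
    mpp a b c₀ ξ η * mmm a b c₀ η χ / ((PhiPP a b ξ η : ℝ) : ℂ) +
    mpm a b c₀ ξ χ * mpm a b c₀ (ξ - χ) (η - χ) / ((PhiPM a b ξ χ : ℝ) : ℂ) +
    mpm a b c₀ ξ η * m'mm a b c₀ η (η - χ) / ((PhiPM a b ξ η : ℝ) : ℂ) +
    mmm a b c₀ ξ χ * m'mp a b c₀ (ξ - χ) (ξ - η) / ((PhiMM a b ξ χ : ℝ) : ℂ) +
    mmm a b c₀ ξ (ξ - χ) * m'mp a b c₀ (ξ - χ) (ξ - η) / ((PhiMM a b ξ (ξ - χ) : ℝ) : ℂ)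

/-- The cubic symbol `m_{---}`. -/
def m3mmm (a b c₀ : ℝ) (ξ η χ : Plane) : ℂ :=
  mpm a b c₀ ξ χ * mmm a b c₀ (ξ - χ) (η - χ) / ((PhiPM a b ξ χ : ℝ) : ℂ) +
    mmm a b c₀ ξ χ * m'mm a b c₀ (ξ - χ) (η - χ) / ((PhiMM a b ξ χ : ℝ) : ℂ) +
    mmm a b c₀ ξ η * m'mm a b c₀ η χ / ((PhiMM a b ξ η : ℝ) : ℂ)

/-- The normal-form profile `Ŵ(ξ,t)` on the Fourier side. -/
def WhatF (a b c₀ : ℝ) (U : ℝ → Plane → ℂ) (t : ℝ) (ξ : Plane) : ℂ :=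
  Complex.exp (Complex.I * (t : ℂ) * ((lamSym a b ξ : ℝ) : ℂ)) * 𝓕 (U t) ξ +
    Complex.I * Complex.exp (Complex.I * (t : ℂ) * ((lamSym a b ξ : ℝ) : ℂ)) *
      ∫ η : Plane,
        mpp a b c₀ ξ η / ((PhiPP a b ξ η : ℝ) : ℂ) * 𝓕 (U t) (ξ - η) * 𝓕 (U t) η +
          mpm a b c₀ ξ η / ((PhiPM a b ξ η : ℝ) : ℂ) * 𝓕 (U t) (ξ - η) * 𝓕 (conjF (U t)) η +
          mmm a b c₀ ξ η / ((PhiMM a b ξ η : ℝ) : ℂ) * 𝓕 (conjF (U t)) (ξ - η) *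
            𝓕 (conjF (U t)) η

/-!
The gradient of `Λ` is `G(x) = a x / Λ(x)`, and `∇Φ_{μν}` is made of differences `G(x) ∓ G(y)`.
Lift `x` to the point `(Λ(x), √a x)` of the hyperboloid `X₀² - |X'|² = b` and let
`M(x, y) = Λ(x)Λ(y) - a⟨x, y⟩` be the Minkowski product of two lifts. A direct computation gives
`|G(x) - G(y)|² Λ(x)Λ(y) ≤ 2a (M(x, y) - b)`, and reverse Cauchy–Schwarz gives `b Λ(x) ≤ 2Λ(y) M(x, y)`;
together, `|G(x) - G(y)| (Λ(x) + Λ(y)) ≲ M(x, y)`. On the other hand the defect of the triangle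
inequality satisfies `(Λ(x) + Λ(y) - Λ(x + y)) (Λ(x) + Λ(y) + Λ(x + y)) = 2M(x, y) + b`, so gradient
differences are controlled by such defects. Up to sign, `Φ_{++}` and `Φ_{+-}` are defects of this
kind, and `Φ_{--} = Λ(ξ) + Λ(ξ - η) + Λ(η)` is harmless because `|G(x)| ≤ √(a/b) Λ(x)`.
-/

theorem norm_fderiv_phase_le {E : Type*} [NormedAddCommGroup E] [InnerProductSpace ℝ E]
    {f : E → ℝ} {g : E → E} (hf : ∀ x, HasFDerivAt f (innerSL ℝ (g x)) x) (μ ν : ℝ) (ξ η : E) :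
    ‖fderiv ℝ (fun p : E × E => f p.1 - μ * f (p.1 - p.2) - ν * f p.2) (ξ, η)‖ ≤
      ‖g ξ - μ • g (ξ - η)‖ + ‖μ • g (ξ - η) - ν • g η‖ := by
  have h₁ : HasFDerivAt (Prod.fst : E × E → E) _ (ξ, η) := hasFDerivAt_fst (𝕜 := ℝ)
  have h₂ : HasFDerivAt (Prod.snd : E × E → E) _ (ξ, η) := hasFDerivAt_snd (𝕜 := ℝ)
  have hd : HasFDerivAt (fun p : E × E => f p.1 - μ * f (p.1 - p.2) - ν * f p.2) _ (ξ, η) :=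
    (((hf ξ).comp (ξ, η) h₁).sub (((hf (ξ - η)).comp (ξ, η) (h₁.sub h₂)).const_mul μ)).sub
      (((hf η).comp (ξ, η) h₂).const_mul ν)
  rw [hd.fderiv]
  refine ContinuousLinearMap.opNorm_le_bound _ (by positivity) fun w => ?_
  calc _ = ‖⟪g ξ - μ • g (ξ - η), w.1⟫ + ⟪μ • g (ξ - η) - ν • g η, w.2⟫‖ := by
        congr 1
        simp only [sub_apply, smul_apply, ContinuousLinearMap.comp_apply, innerSL_apply_apply,
          inner_sub_left, inner_sub_right, real_inner_smul_left, smul_eq_mul,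
          ContinuousLinearMap.coe_fst', ContinuousLinearMap.coe_snd']
        ring
    _ ≤ ‖g ξ - μ • g (ξ - η)‖ * ‖w.1‖ + ‖μ • g (ξ - η) - ν • g η‖ * ‖w.2‖ :=
        (norm_add_le _ _).trans (add_le_add (norm_inner_le_norm _ _) (norm_inner_le_norm _ _))
    _ ≤ ‖g ξ - μ • g (ξ - η)‖ * ‖w‖ + ‖μ • g (ξ - η) - ν • g η‖ * ‖w‖ := by
        gcongr
        exacts [norm_fst_le w, norm_snd_le w]
    _ = _ := by ring

section

variable {a b : ℝ}

theorem lamSym_sq (ha : 0 ≤ a) (hb : 0 ≤ b) (x : Plane) : lamSym a b x ^ 2 = a * ‖x‖ ^ 2 + b :=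
  Real.sq_sqrt (by positivity)

theorem lamSym_pos (ha : 0 ≤ a) (hb : 0 < b) (x : Plane) : 0 < lamSym a b x :=
  Real.sqrt_pos.2 (by positivity)

theorem lamSym_neg (x : Plane) : lamSym a b (-x) = lamSym a b x := by
  simp only [lamSym, norm_neg]

def lamGrad (a b : ℝ) (x : Plane) : Plane := (a / lamSym a b x) • x

theorem lamGrad_neg (x : Plane) : lamGrad a b (-x) = -lamGrad a b x := by
  simp only [lamGrad, lamSym_neg, smul_neg]

theorem hasFDerivAt_lamSym (ha : 0 ≤ a) (hb : 0 < b) (x : Plane) :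
    HasFDerivAt (lamSym a b) (innerSL ℝ (lamGrad a b x)) x := by
  have h : HasFDerivAt (lamSym a b) _ x :=
    (((hasFDerivAt_id (𝕜 := ℝ) x).norm_sq.const_mul a).add_const b).sqrt (by positivity)
  refine h.congr_fderiv (ContinuousLinearMap.ext fun w => ?_)
  have hA := (lamSym_pos ha hb x).ne'
  simp only [lamGrad, innerSL_apply_apply, real_inner_smul_left, smul_apply, smul_eq_mul,
    ContinuousLinearMap.comp_apply, ContinuousLinearMap.id_apply, id, nsmul_eq_mul, Nat.cast_ofNat]
  rw [← lamSym]
  field_simp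

/-- `lamPair a b x y` is the Minkowski product of the lifts `(Λ(x), √a x)`, `(Λ(y), √a y)`
of `x`, `y` to the hyperboloid `X₀² - |X'|² = b`. -/
def lamPair (a b : ℝ) (x y : Plane) : ℝ := lamSym a b x * lamSym a b y - a * ⟪x, y⟫

theorem mul_lamSym_le_lamPair (ha : 0 ≤ a) (hb : 0 < b) (x y : Plane) :
    b * lamSym a b x ≤ 2 * lamSym a b y * lamPair a b x y := by
  set A := lamSym a b x
  set B := lamSym a b y
  have hA : 0 < A := lamSym_pos ha hb x
  have hB : 0 < B := lamSym_pos ha hb y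
  have hA2 : A ^ 2 = a * ‖x‖ ^ 2 + b := lamSym_sq ha hb.le x
  have hB2 : B ^ 2 = a * ‖y‖ ^ 2 + b := lamSym_sq ha hb.le y
  have hbA : b ≤ A ^ 2 := by nlinarith [sq_nonneg ‖x‖]
  have hbB : b ≤ B ^ 2 := by nlinarith [sq_nonneg ‖y‖]
  have hxy : a * ⟪x, y⟫ ≤ a * (‖x‖ * ‖y‖) := mul_le_mul_of_nonneg_left (real_inner_le_norm x y) ha
  have hsq : 2 * B * (a * (‖x‖ * ‖y‖)) ≤ A * (2 * B ^ 2 - b) := by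
    refine (pow_le_pow_iff_left₀ (by positivity) (by nlinarith) two_ne_zero).1 ?_
    calc (2 * B * (a * (‖x‖ * ‖y‖))) ^ 2 = 4 * B ^ 2 * ((a * ‖x‖ ^ 2) * (a * ‖y‖ ^ 2)) := by ring
      _ = 4 * B ^ 2 * ((A ^ 2 - b) * (B ^ 2 - b)) := by rw [hA2, hB2]; ring
      _ ≤ (A * (2 * B ^ 2 - b)) ^ 2 := by
        nlinarith [mul_nonneg hb.le (add_nonneg (mul_nonneg hb.le (sub_nonneg.2 hbA))
          (sq_nonneg (2 * B ^ 2 - b)))]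
  unfold lamPair
  nlinarith

theorem lamPair_comm (x y : Plane) : lamPair a b x y = lamPair a b y x := by
  rw [lamPair, lamPair, mul_comm, real_inner_comm]

theorem lamPair_pos (ha : 0 ≤ a) (hb : 0 < b) (x y : Plane) : 0 < lamPair a b x y := by
  have h := mul_lamSym_le_lamPair ha hb x y
  have hA := lamSym_pos ha hb x
  have hB := lamSym_pos ha hb y
  nlinarith

theorem lamSym_add_le (ha : 0 ≤ a) (hb : 0 < b) (x y : Plane) :
    lamSym a b (x + y) ≤ lamSym a b x + lamSym a b y := by
  have hA := lamSym_pos ha hb x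
  have hB := lamSym_pos ha hb y
  refine (pow_le_pow_iff_left₀ (lamSym_pos ha hb _).le (by positivity) two_ne_zero).1 ?_
  have hM := lamPair_pos ha hb x y
  rw [lamPair] at hM
  rw [add_sq, lamSym_sq ha hb.le, lamSym_sq ha hb.le, lamSym_sq ha hb.le, norm_add_sq_real]
  nlinarith

theorem lamSym_add_defect (ha : 0 ≤ a) (hb : 0 ≤ b) (x y : Plane) :
    (lamSym a b x + lamSym a b y - lamSym a b (x + y)) *
        (lamSym a b x + lamSym a b y + lamSym a b (x + y)) = 2 * lamPair a b x y + b := by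
  have hE := lamSym_sq ha hb (x + y)
  rw [norm_add_sq_real] at hE
  rw [lamPair]
  linear_combination lamSym_sq ha hb x + lamSym_sq ha hb y - hE

theorem lamPair_le_lamPair_sub_add (ha : 0 ≤ a) (hb : 0 < b) (x y : Plane) :
    lamPair a b x y ≤ lamPair a b y (x - y) + b := by
  have htri := lamSym_add_le ha hb y (x - y)
  rw [add_sub_cancel] at htri
  have hA := lamSym_pos ha hb y
  have hA2 := lamSym_sq ha hb.le y
  rw [lamPair, lamPair, inner_sub_right, real_inner_self_eq_norm_sq, real_inner_comm]
  nlinarith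

theorem norm_lamGrad_sub_sq_mul (ha : 0 ≤ a) (hb : 0 < b) (x y : Plane) :
    ‖lamGrad a b x - lamGrad a b y‖ ^ 2 * (lamSym a b x * lamSym a b y) ^ 2 =
      a * (2 * (lamSym a b x * lamSym a b y) * lamPair a b x y -
        b * (lamSym a b x ^ 2 + lamSym a b y ^ 2)) := by
  have hA := (lamSym_pos ha hb x).ne'
  have hB := (lamSym_pos ha hb y).ne'
  rw [lamGrad, lamGrad, norm_sub_sq_real, norm_smul, norm_smul, real_inner_smul_left,
    real_inner_smul_right, Real.norm_eq_abs, Real.norm_eq_abs, mul_pow, mul_pow, sq_abs,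
    sq_abs, lamPair]
  field_simp
  linear_combination (-a * lamSym a b y ^ 2) * lamSym_sq ha hb.le x -
    (a * lamSym a b x ^ 2) * lamSym_sq ha hb.le y

theorem norm_lamGrad_sub_mul_le (ha : 0 ≤ a) (hb : 0 < b) (x y : Plane) :
    ‖lamGrad a b x - lamGrad a b y‖ * (lamSym a b x + lamSym a b y) ≤
      3 * Real.sqrt (a / b) * lamPair a b x y := by
  have hQ := norm_lamGrad_sub_sq_mul ha hb x y
  have hx := mul_lamSym_le_lamPair ha hb x y
  have hy := mul_lamSym_le_lamPair ha hb y x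
  rw [lamPair_comm] at hy
  have hA := lamSym_pos ha hb x
  have hB := lamSym_pos ha hb y
  have hM := lamPair_pos ha hb x y
  refine (pow_le_pow_iff_left₀ (by positivity) (by positivity) two_ne_zero).1 ?_
  rw [mul_pow, mul_pow, mul_pow, Real.sq_sqrt (div_nonneg ha hb.le),
    show 3 ^ 2 * (a / b) * lamPair a b x y ^ 2 = 9 * a * lamPair a b x y ^ 2 / b by ring,
    le_div_iff₀ hb]
  set A := lamSym a b x
  set B := lamSym a b y
  set M := lamPair a b x y
  set Q := ‖lamGrad a b x - lamGrad a b y‖ ^ 2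
  have hQAB : Q * (A * B) ≤ 2 * a * (M - b) := by
    refine le_of_mul_le_mul_right ?_ (mul_pos hA hB)
    nlinarith [mul_nonneg ha (mul_nonneg hb.le (sq_nonneg (A - B)))]
  have hAB : b * (A + B) ^ 2 ≤ A * B * (4 * M + 2 * b) := by nlinarith
  calc Q * (A + B) ^ 2 * b = Q * (b * (A + B) ^ 2) := by ring
    _ ≤ Q * (A * B * (4 * M + 2 * b)) := by gcongr
    _ = Q * (A * B) * (4 * M + 2 * b) := by ring
    _ ≤ 2 * a * (M - b) * (4 * M + 2 * b) := by gcongr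
    _ ≤ 9 * a * M ^ 2 := by nlinarith [mul_nonneg ha (sq_nonneg (M + 2 * b))]

theorem norm_lamGrad_sub_le (ha : 0 ≤ a) (hb : 0 < b) (x y : Plane) :
    ‖lamGrad a b x - lamGrad a b y‖ ≤
      6 * Real.sqrt (a / b) * (lamSym a b y + lamSym a b (x - y) - lamSym a b x) := by
  set c := Real.sqrt (a / b)
  set D := lamSym a b y + lamSym a b (x - y) - lamSym a b x
  have hM := lamPair_le_lamPair_sub_add ha hb x y
  have hM' := lamPair_pos ha hb y (x - y)
  have hD := lamSym_add_defect ha hb.le y (x - y)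
  have htri := lamSym_add_le ha hb y (x - y)
  have htri' := lamSym_add_le ha hb x (-y)
  rw [add_sub_cancel] at hD htri
  rw [← sub_eq_add_neg, lamSym_neg] at htri'
  have hA := lamSym_pos ha hb x
  have hB := lamSym_pos ha hb y
  have hD0 : 0 ≤ D := by linarith
  refine le_of_mul_le_mul_right (a := lamSym a b x + lamSym a b y) ?_ (by positivity)
  calc ‖lamGrad a b x - lamGrad a b y‖ * (lamSym a b x + lamSym a b y)
      ≤ 3 * c * lamPair a b x y := norm_lamGrad_sub_mul_le ha hb x y
    _ ≤ 3 * c * (D * (lamSym a b y + lamSym a b (x - y) + lamSym a b x)) := by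
        gcongr
        linarith
    _ ≤ 3 * c * (D * (2 * (lamSym a b x + lamSym a b y))) := by
        gcongr
        linarith
    _ = 6 * c * D * (lamSym a b x + lamSym a b y) := by ring

theorem norm_lamGrad_le (ha : 0 ≤ a) (hb : 0 < b) (x : Plane) :
    ‖lamGrad a b x‖ ≤ Real.sqrt (a / b) * lamSym a b x := by
  have hA := lamSym_pos ha hb x
  have hA2 := lamSym_sq ha hb.le x
  refine (pow_le_pow_iff_left₀ (norm_nonneg _) (by positivity) two_ne_zero).1 ?_
  rw [lamGrad, norm_smul, mul_pow, mul_pow, Real.sq_sqrt (div_nonneg ha hb.le), Real.norm_eq_abs,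
    sq_abs, div_pow]
  calc a ^ 2 / lamSym a b x ^ 2 * ‖x‖ ^ 2 = a * (a * ‖x‖ ^ 2) / lamSym a b x ^ 2 := by ring
    _ ≤ a := by
        rw [div_le_iff₀ (by positivity)]
        nlinarith [mul_nonneg ha hb.le]
    _ ≤ a / b * lamSym a b x ^ 2 := by
        rw [div_mul_eq_mul_div, le_div_iff₀ hb]
        nlinarith [mul_nonneg ha (mul_nonneg ha (sq_nonneg ‖x‖))]

theorem phiPP_grad_le (ha : 0 ≤ a) (hb : 0 < b) (ξ η : Plane) :
    ‖lamGrad a b ξ - lamGrad a b (ξ - η)‖ + ‖lamGrad a b (ξ - η) - lamGrad a b η‖ ≤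
      18 * Real.sqrt (a / b) * |PhiPP a b ξ η| := by
  have h₁ := norm_lamGrad_sub_le ha hb ξ (ξ - η)
  have h₂ := norm_lamGrad_sub_le ha hb ξ η
  have h₃ := norm_sub_le_norm_sub_add_norm_sub (lamGrad a b (ξ - η)) (lamGrad a b ξ) (lamGrad a b η)
  have htri := lamSym_add_le ha hb (ξ - η) η
  rw [sub_sub_cancel] at h₁
  rw [sub_add_cancel] at htri
  rw [norm_sub_rev (lamGrad a b (ξ - η)) (lamGrad a b ξ)] at h₃
  rw [PhiPP, abs_of_nonpos (by linarith)]
  linarith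

theorem phiPM_grad_le (ha : 0 ≤ a) (hb : 0 < b) (ξ η : Plane) :
    ‖lamGrad a b ξ - lamGrad a b (ξ - η)‖ + ‖lamGrad a b (ξ - η) + lamGrad a b η‖ ≤
      18 * Real.sqrt (a / b) * |PhiPM a b ξ η| := by
  have h₁ := norm_lamGrad_sub_le ha hb (ξ - η) ξ
  have h₂ := norm_lamGrad_sub_le ha hb (ξ - η) (-η)
  have htri := lamSym_add_le ha hb ξ (-η)
  rw [sub_sub_cancel_left, lamSym_neg, norm_sub_rev] at h₁
  rw [sub_neg_eq_add, sub_add_cancel, lamGrad_neg, sub_neg_eq_add, lamSym_neg] at h₂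
  rw [← sub_eq_add_neg, lamSym_neg] at htri
  have hc : 0 ≤ Real.sqrt (a / b) := Real.sqrt_nonneg _
  rw [PhiPM, abs_of_nonneg (by linarith)]
  nlinarith

theorem phiMM_grad_le (ha : 0 ≤ a) (hb : 0 < b) (ξ η : Plane) :
    ‖lamGrad a b ξ + lamGrad a b (ξ - η)‖ + ‖-lamGrad a b (ξ - η) + lamGrad a b η‖ ≤
      18 * Real.sqrt (a / b) * |PhiMM a b ξ η| := by
  have h₁ := norm_add_le (lamGrad a b ξ) (lamGrad a b (ξ - η))
  have h₂ := norm_add_le (-lamGrad a b (ξ - η)) (lamGrad a b η)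
  rw [norm_neg] at h₂
  have g₁ := norm_lamGrad_le ha hb ξ
  have g₂ := norm_lamGrad_le ha hb (ξ - η)
  have g₃ := norm_lamGrad_le ha hb η
  have l₁ := lamSym_pos ha hb ξ
  have l₂ := lamSym_pos ha hb (ξ - η)
  have l₃ := lamSym_pos ha hb η
  have hc : 0 ≤ Real.sqrt (a / b) := Real.sqrt_nonneg _
  rw [PhiMM, abs_of_pos (by linarith)]
  nlinarith

end

/-- `|∇_{ξ,η}Φ_{μν}| ≲ |Φ_{μν}|` for the three phases. -/
theorem phase_grad_bound (a b : ℝ) (ha : 0 < a) (hb : 0 < b) :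
    ∃ C : ℝ, 0 < C ∧
      ∀ μ ν : ℝ, ((μ, ν) = ((1 : ℝ), (1 : ℝ)) ∨ (μ, ν) = ((1 : ℝ), (-1 : ℝ)) ∨
          (μ, ν) = ((-1 : ℝ), (-1 : ℝ))) →
        ∀ ξ η : Plane,
          ‖fderiv ℝ
              (fun p : Plane × Plane =>
                lamSym a b p.1 - μ * lamSym a b (p.1 - p.2) - ν * lamSym a b p.2)
              (ξ, η)‖ ≤
            C * |lamSym a b ξ - μ * lamSym a b (ξ - η) - ν * lamSym a b η| := by
  refine ⟨18 * Real.sqrt (a / b), by positivity, ?_⟩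
  rintro μ ν hμν ξ η
  refine (norm_fderiv_phase_le (hasFDerivAt_lamSym ha.le hb) μ ν ξ η).trans ?_
  rcases hμν with h | h | h <;> obtain ⟨rfl, rfl⟩ := Prod.mk.inj h <;>
    simp only [one_smul, one_mul, neg_smul, neg_mul, sub_neg_eq_add]
  · exact phiPP_grad_le ha.le hb ξ η
  · exact phiPM_grad_le ha.le hb ξ η
  · exact phiMM_grad_le ha.le hb ξ η

end
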